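/- arXiv:cs/0406006 — 3 statements merged into one kernel-verified Lean document; each statement's English description precedes it below -/
import Mathlib

section
/- Let C be a complementive finite set of constraints and let S(x_1,…,x_n,0,1) be a set of constraint applications of C with constants. Then for any quantifiers Q_1,…,Q_n ∈ {∃,∀}, the quantified expression Q_1x_1 Q_2x_2 ⋯ Q_nx_n S(x_1,…,x_n,0,1) is true if and only if Q_1x_1 Q_2x_2 ⋯ Q_nx_n S(x_1,…,x_n,1,0) is true, where the latter is obtained from the former by swapping the constants 0 and 1 throughout. -/
/-- A constraint application with constants, over variables indexed by `Fin n`: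
a constraint `C : {0,1}^arity → {0,1}` applied to arguments each of which is
either a variable (`Sum.inl`) or a Boolean constant (`Sum.inr`). -/
structure CApp (n : ℕ) where
  arity : ℕ
  C : (Fin arity → Bool) → Bool
  args : Fin arity → Fin n ⊕ Bool

/-- Evaluate a constraint application under an assignment to the variables. -/
def CApp.eval {n : ℕ} (A : CApp n) (a : Fin n → Bool) : Bool :=
  A.C (fun i => Sum.elim a id (A.args i))

/-- Swap the constants 0 and 1 in the argument list. -/
def CApp.swapConsts {n : ℕ} (A : CApp n) : CApp n :=
  ⟨A.arity, A.C, fun i => Sum.map id (fun b => !b) (A.args i)⟩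

/-- Truth of the quantified Boolean statement `Q₁x₁ ⋯ Qₙxₙ P(x₁,…,xₙ)`, where
`Q i = true` denotes a universal quantifier and `Q i = false` an existential one. -/
def QTrue : (n : ℕ) → (Fin n → Bool) → ((Fin n → Bool) → Prop) → Prop
  | 0, _, P => P (fun i => i.elim0)
  | n + 1, Q, P =>
      cond (Q 0)
        (∀ b : Bool, QTrue n (fun j => Q j.succ) (fun a => P (Fin.cons b a)))
        (∃ b : Bool, QTrue n (fun j => Q j.succ) (fun a => P (Fin.cons b a)))

lemma qtrue_congr : ∀ (n : ℕ) (Q : Fin n → Bool) (P P' : (Fin n → Bool) → Prop),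
    (∀ a, P a ↔ P' a) → (QTrue n Q P ↔ QTrue n Q P')
  | 0, _, P, P', h => h _
  | n + 1, Q, P, P', h => by
    unfold QTrue
    cases Q 0
    · exact exists_congr (fun b => qtrue_congr n _ _ _ (fun a => h _))
    · exact forall_congr' (fun b => qtrue_congr n _ _ _ (fun a => h _))

lemma qtrue_neg : ∀ (n : ℕ) (Q : Fin n → Bool) (P : (Fin n → Bool) → Prop),
    QTrue n Q P ↔ QTrue n Q (fun a => P (fun i => !(a i)))
  | 0, _, P => by
    show P (fun i => i.elim0) ↔ P (fun i : Fin 0 => !((fun i : Fin 0 => i.elim0) i))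
    exact iff_of_eq (congrArg P (funext fun i => i.elim0))
  | n + 1, Q, P => by
    unfold QTrue
    have key : ∀ b : Bool,
        QTrue n (fun j => Q j.succ) (fun a => P (Fin.cons b a)) ↔
        QTrue n (fun j => Q j.succ)
          (fun a => P (fun i => !((Fin.cons (!b) a : Fin (n+1) → Bool) i))) := by
      intro b
      rw [qtrue_neg n _ (fun a => P (Fin.cons b a))]
      apply qtrue_congr
      intro a
      have : (Fin.cons b (fun j => !(a j)) : Fin (n+1) → Bool)
          = fun i => !((Fin.cons (!b) a : Fin (n+1) → Bool) i) := by
        funext i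
        refine Fin.cases ?_ ?_ i <;> simp
      rw [this]
    cases Q 0 <;> simp only [cond]
    · constructor
      · rintro ⟨b, hb⟩
        exact ⟨!b, by simpa using (key b).mp hb⟩
      · rintro ⟨b, hb⟩
        refine ⟨!b, ?_⟩
        have := (key (!b)).mpr
        simp only [Bool.not_not] at this ⊢
        exact this hb
    · constructor
      · intro h b
        have := (key (!b)).mp (h (!b))
        simpa using this
      · intro h b
        have := h (!b)
        exact (key b).mpr (by simpa using this)

lemma swap_eval {n : ℕ} (A : CApp n)
    (hc : ∀ s : Fin A.arity → Bool, A.C s = A.C (fun i => !(s i)))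
    (a : Fin n → Bool) :
    A.swapConsts.eval a = A.eval (fun i => !(a i)) := by
  unfold CApp.eval CApp.swapConsts
  simp only
  rw [hc (fun i => Sum.elim a id (Sum.map id (fun b => !b) (A.args i)))]
  congr 1
  funext i
  cases h : A.args i <;> simp [h]

/-- If every constraint occurring in the set `S` of constraint applications is
complementive (`C(s) = C(s̄)` for all `s`), then the quantified expression
`Q₁x₁ ⋯ Qₙxₙ S(x₁,…,xₙ,0,1)` is true iff `Q₁x₁ ⋯ Qₙxₙ S(x₁,…,xₙ,1,0)`,
obtained by swapping the constants 0 and 1 throughout, is true. -/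
theorem complementive_swap_constants (n : ℕ) (Q : Fin n → Bool) (S : List (CApp n))
    (hcompl : ∀ A ∈ S, ∀ s : Fin A.arity → Bool, A.C s = A.C (fun i => !(s i))) :
    QTrue n Q (fun a => ∀ A ∈ S, A.eval a = true) ↔
      QTrue n Q (fun a => ∀ A ∈ S, A.swapConsts.eval a = true) := by
  rw [qtrue_neg n Q (fun a => ∀ A ∈ S, A.eval a = true)]
  apply qtrue_congr
  intro a
  constructor <;> intro h A hA <;>
    [rw [swap_eval A (hcompl A hA)]; rw [← swap_eval A (hcompl A hA)]] <;>
    exact h A hA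
end

section
/- Let S be any Boolean predicate of a block of variables X_1, a block of variables X_2, and two additional Boolean arguments f,t. Then ∀X_1 ∃X_2 S(X_1,X_2,0,1) is true if and only if ∀X_1 ∀y ∀z ∃f ∃t ∃X_2 [S(X_1,X_2,f,t) ∧ (¬f ∨ y) ∧ (¬z ∨ t)] is true. -/
/-- `∀X₁ ∃X₂ S(X₁,X₂,0,1)` is true iff
`∀X₁ ∀y ∀z ∃f ∃t ∃X₂ [S(X₁,X₂,f,t) ∧ (f̄ ∨ y) ∧ (z̄ ∨ t)]` is true,
where `X₁` and `X₂` are blocks of Boolean variables (of sizes `n₁` and `n₂`). -/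
theorem pi2_constants_elimination (n₁ n₂ : ℕ)
    (S : (Fin n₁ → Bool) → (Fin n₂ → Bool) → Bool → Bool → Prop) :
    (∀ X₁ : Fin n₁ → Bool, ∃ X₂ : Fin n₂ → Bool, S X₁ X₂ false true) ↔
      (∀ X₁ : Fin n₁ → Bool, ∀ y z : Bool, ∃ f t : Bool, ∃ X₂ : Fin n₂ → Bool,
        S X₁ X₂ f t ∧ (!f || y) = true ∧ (!z || t) = true) := by
  constructor
  · intro h X₁ y z
    obtain ⟨X₂, hX₂⟩ := h X₁
    exact ⟨false, true, X₂, hX₂, by simp, by simp⟩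
  · intro h X₁
    obtain ⟨f, t, X₂, hS, hf, ht⟩ := h X₁ false true
    cases f <;> cases t <;> simp_all
end

section
/- Let X_1,…,X_i be disjoint blocks of Boolean variables with alternating quantifier prefix ∀X_1 ∃X_2 ⋯ ∃X_i starting with ∀ and ending with ∃ (so i is even, i ≥ 2), and let S be a Boolean predicate of the assignments to X_1,…,X_i and two additional Boolean arguments b,b'. Assume the swap property: ∀X_1 ∃X_2 ⋯ ∃X_i S(X_1,…,X_i,0,1) is true if and only if ∀X_1 ∃X_2 ⋯ ∃X_i S(X_1,…,X_i,1,0) is true (this holds in particular when S is a set of constraint applications of a complementive set of constraints). Then ∀X_1 ∃X_2 ⋯ ∃X_i S(X_1,…,X_i,0,1) is true if and only if ∀b ∀X_1 ∃X_2 ⋯ ∃X_i ∃b' [S(X_1,…,X_i,b,b') ∧ (b ⊕ b')] is true, where b ⊕ b' denotes exclusive or. -/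
/-- Truth of a quantified Boolean statement whose quantifier prefix consists of `i`
alternating blocks of Boolean variables (block `j` has `sizes j` variables, and
quantifying a block means quantifying over all assignments to it). If `ex = true`
the first block is existentially quantified, otherwise universally, and the
quantifiers alternate from block to block. The predicate `P` receives the
assignments to all blocks. -/
def AltTrue : (i : ℕ) → (sizes : Fin i → ℕ) → Bool →
    ((∀ j : Fin i, Fin (sizes j) → Bool) → Prop) → Prop
  | 0, _, _, P => P (fun j => j.elim0)
  | i + 1, sizes, ex, P =>
      cond ex
        (∃ v : Fin (sizes 0) → Bool,
          AltTrue i (fun j => sizes j.succ) (!ex)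
            (fun a => P (Fin.cons (α := fun j => Fin (sizes j) → Bool) v a)))
        (∀ v : Fin (sizes 0) → Bool,
          AltTrue i (fun j => sizes j.succ) (!ex)
            (fun a => P (Fin.cons (α := fun j => Fin (sizes j) → Bool) v a)))

theorem AltTrue_congr : ∀ (i : ℕ) (sizes : Fin i → ℕ) (ex : Bool)
    (P Q : (∀ j : Fin i, Fin (sizes j) → Bool) → Prop),
    (∀ a, P a ↔ Q a) → (AltTrue i sizes ex P ↔ AltTrue i sizes ex Q)
  | 0, _, _, P, Q, h => h _
  | i + 1, sizes, ex, P, Q, h => by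
    cases ex <;> simp only [AltTrue, cond] <;>
      [exact forall_congr' fun v => AltTrue_congr _ _ _ _ _ fun a => h _;
       exact exists_congr fun v => AltTrue_congr _ _ _ _ _ fun a => h _]

/-- Let `∀X₁ ∃X₂ ⋯ ∃X_i` be an alternating quantifier prefix starting with `∀`
and ending with `∃` (so `i` is even, `i ≥ 2`), and assume the swap property:
`∀X₁ ∃X₂ ⋯ ∃X_i S(X₁,…,X_i,0,1)` is true iff `∀X₁ ∃X₂ ⋯ ∃X_i S(X₁,…,X_i,1,0)`
is true. Then `∀X₁ ∃X₂ ⋯ ∃X_i S(X₁,…,X_i,0,1)` is true iff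
`∀b ∀X₁ ∃X₂ ⋯ ∃X_i ∃b' [S(X₁,…,X_i,b,b') ∧ (b ⊕ b')]` is true. -/
theorem xor_constants_elimination_even (i : ℕ) (heven : Even i) (hi : 2 ≤ i)
    (sizes : Fin i → ℕ)
    (S : (∀ j : Fin i, Fin (sizes j) → Bool) → Bool → Bool → Prop)
    (hswap :
      AltTrue i sizes false (fun a => S a false true) ↔
        AltTrue i sizes false (fun a => S a true false)) :
    AltTrue i sizes false (fun a => S a false true) ↔
      ∀ b : Bool,
        AltTrue i sizes false
          (fun a => ∃ b' : Bool, S a b b' ∧ (b ^^ b') = true) := by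
  have h0 : AltTrue i sizes false (fun a => ∃ b', S a false b' ∧ (false ^^ b') = true)
      ↔ AltTrue i sizes false (fun a => S a false true) := by
    apply AltTrue_congr
    intro a
    constructor
    · rintro ⟨b', hb, hx⟩
      simp at hx; subst hx; exact hb
    · intro h; exact ⟨true, h, rfl⟩
  have h1 : AltTrue i sizes false (fun a => ∃ b', S a true b' ∧ (true ^^ b') = true)
      ↔ AltTrue i sizes false (fun a => S a true false) := by
    apply AltTrue_congr
    intro a
    constructor
    · rintro ⟨b', hb, hx⟩
      simp at hx; subst hx; exact hb
    · intro h; exact ⟨false, h, rfl⟩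
  constructor
  · intro h b
    cases b
    · exact h0.mpr h
    · exact h1.mpr (hswap.mp h)
  · intro h
    exact h0.mp (h false)
end
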